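/- arXiv:2302.13503 — 2 statements merged into one kernel-verified Lean document; each statement's English description precedes it below -/
import Mathlib

section
/- A compact convex set C ⊆ ℝ^k is a polytope if and only if C is locally a polytope at every extreme point of C and the set of extreme points of C is finite. -/
/-- `C` is locally a polytope at `w` if on some open neighborhood `U` of `w`, the set `C`
agrees with a finite intersection of closed half-spaces. -/
def IsLocallyPolytopeAt {k : ℕ} (C : Set (Fin k → ℝ)) (w : Fin k → ℝ) : Prop :=
  ∃ U : Set (Fin k → ℝ), IsOpen U ∧ w ∈ U ∧
    ∃ (s : ℕ) (a : Fin s → Fin k → ℝ) (c : Fin s → ℝ),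
      C ∩ U = (⋂ i, {x : Fin k → ℝ | c i ≤ ∑ j, a i j * x j}) ∩ U

def lin {k : ℕ} (a x : Fin k → ℝ) : ℝ := ∑ j, a j * x j

lemma lin_continuous {k : ℕ} (a : Fin k → ℝ) : Continuous (lin a) :=
  continuous_finset_sum _ fun j _ => continuous_const.mul (continuous_apply j)

lemma lin_add {k : ℕ} (a x y : Fin k → ℝ) : lin a (x + y) = lin a x + lin a y := by
  simp [lin, mul_add, Finset.sum_add_distrib]

lemma lin_smul {k : ℕ} (a : Fin k → ℝ) (t : ℝ) (x : Fin k → ℝ) :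
    lin a (t • x) = t * lin a x := by
  simp only [lin, Finset.mul_sum]
  exact Finset.sum_congr rfl fun j _ => by simp [smul_eq_mul]; ring

lemma lin_sub {k : ℕ} (a x y : Fin k → ℝ) : lin a (x - y) = lin a x - lin a y := by
  have := lin_add a y (x - y); simp at this; linarith

/-- small perturbations in both directions stay in an open set -/
lemma exists_small_step {k : ℕ} {O : Set (Fin k → ℝ)} (hO : IsOpen O) {w : Fin k → ℝ}
    (hw : w ∈ O) (v : Fin k → ℝ) :
    ∃ t : ℝ, 0 < t ∧ t ≤ 1 ∧ w + t • v ∈ O ∧ w - t • v ∈ O := by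
  have hg : Continuous fun t : ℝ => w + t • v := by continuity
  have hh : Continuous fun t : ℝ => w - t • v := by continuity
  have hS : IsOpen ((fun t : ℝ => w + t • v) ⁻¹' O ∩ (fun t : ℝ => w - t • v) ⁻¹' O) :=
    (hO.preimage hg).inter (hO.preimage hh)
  have h0 : (0 : ℝ) ∈ (fun t : ℝ => w + t • v) ⁻¹' O ∩ (fun t : ℝ => w - t • v) ⁻¹' O := by
    simp [hw]
  obtain ⟨ε, hε, hball⟩ := Metric.isOpen_iff.mp hS 0 h0
  have hmem : min (ε / 2) 1 ∈ Metric.ball (0:ℝ) ε := by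
    have h1 : (0:ℝ) < min (ε / 2) 1 := by positivity
    have h2 : min (ε / 2) 1 ≤ ε / 2 := min_le_left _ _
    simp only [Metric.mem_ball, Real.dist_eq, sub_zero, abs_of_pos h1]
    linarith
  exact ⟨min (ε / 2) 1, by positivity, min_le_right _ _, (hball hmem).1, (hball hmem).2⟩

lemma seg_id {k : ℕ} (w x : Fin k → ℝ) (t : ℝ) :
    w + t • (x - w) = (1 - t) • w + t • x := by
  funext j; simp [Pi.smul_apply, smul_eq_mul]; ring

/-- A constraint that is tight at a point of C under a local representation holds globally. -/
lemma tight_global {k : ℕ} {C U : Set (Fin k → ℝ)} (hconv : Convex ℝ C) (hU : IsOpen U)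
    {w : Fin k → ℝ} (hwU : w ∈ U) (hwC : w ∈ C) {s : ℕ} {a : Fin s → Fin k → ℝ} {c : Fin s → ℝ}
    (hrep : C ∩ U = (⋂ i, {x : Fin k → ℝ | c i ≤ ∑ j, a i j * x j}) ∩ U)
    {i : Fin s} (hi : lin (a i) w ≤ c i) {x : Fin k → ℝ} (hx : x ∈ C) :
    c i ≤ lin (a i) x := by
  have hwP : w ∈ (⋂ i, {x : Fin k → ℝ | c i ≤ ∑ j, a i j * x j}) ∩ U := by
    rw [← hrep]; exact ⟨hwC, hwU⟩
  have heq : lin (a i) w = c i :=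
    le_antisymm hi (Set.mem_iInter.mp hwP.1 i)
  obtain ⟨t, ht0, ht1, hmem, -⟩ := exists_small_step hU hwU (x - w)
  have hyC : w + t • (x - w) ∈ C := by
    rw [seg_id]
    exact hconv hwC hx (by linarith) (le_of_lt ht0) (by ring)
  have hyP : w + t • (x - w) ∈ (⋂ i, {x : Fin k → ℝ | c i ≤ ∑ j, a i j * x j}) ∩ U := by
    rw [← hrep]; exact ⟨hyC, hmem⟩
  have h1 : c i ≤ lin (a i) (w + t • (x - w)) := Set.mem_iInter.mp hyP.1 i
  rw [lin_add, lin_smul, lin_sub] at h1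
  nlinarith

/-- A direction nonnegative on all tight constraints points into C. -/
lemma dir_into {k : ℕ} {C U : Set (Fin k → ℝ)} (hU : IsOpen U)
    {w : Fin k → ℝ} (hwU : w ∈ U) (hwC : w ∈ C) {s : ℕ} {a : Fin s → Fin k → ℝ} {c : Fin s → ℝ}
    (hrep : C ∩ U = (⋂ i, {x : Fin k → ℝ | c i ≤ ∑ j, a i j * x j}) ∩ U)
    {v : Fin k → ℝ} (hv : ∀ i, lin (a i) w ≤ c i → 0 ≤ lin (a i) v) :
    ∃ t : ℝ, 0 < t ∧ w + t • v ∈ C := by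
  classical
  have hwP : w ∈ (⋂ i, {x : Fin k → ℝ | c i ≤ ∑ j, a i j * x j}) ∩ U := by
    rw [← hrep]; exact ⟨hwC, hwU⟩
  set N : Finset (Fin s) := Finset.univ.filter (fun i => ¬ lin (a i) w ≤ c i) with hN
  have hOopen : IsOpen (U ∩ ⋂ i ∈ N, {x : Fin k → ℝ | c i < lin (a i) x}) :=
    hU.inter (isOpen_biInter_finset fun i _ => isOpen_lt continuous_const (lin_continuous _))
  have hwO : w ∈ U ∩ ⋂ i ∈ N, {x : Fin k → ℝ | c i < lin (a i) x} := by
    refine ⟨hwU, Set.mem_iInter₂.mpr fun i hiN => ?_⟩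
    have := Finset.mem_filter.mp hiN
    exact lt_of_not_ge this.2
  obtain ⟨t, ht0, -, hmem, -⟩ := exists_small_step hOopen hwO v
  refine ⟨t, ht0, ?_⟩
  have : w + t • v ∈ C ∩ U := by
    rw [hrep]
    refine ⟨Set.mem_iInter.mpr fun i => ?_, hmem.1⟩
    show c i ≤ lin (a i) (w + t • v)
    rw [lin_add, lin_smul]
    by_cases hi : lin (a i) w ≤ c i
    · have heq : lin (a i) w = c i := le_antisymm hi (Set.mem_iInter.mp hwP.1 i)
      have := hv i hi
      nlinarith
    · have hiN : i ∈ N := Finset.mem_filter.mpr ⟨Finset.mem_univ _, hi⟩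
      have h2 := Set.mem_iInter₂.mp hmem.2 i hiN
      have h3 : c i < lin (a i) (w + t • v) := h2
      rw [lin_add, lin_smul] at h3
      linarith
  exact this.1

def IsPolySet {k : ℕ} (C : Set (Fin k → ℝ)) : Prop :=
  ∃ (s : ℕ) (a : Fin s → Fin k → ℝ) (c : Fin s → ℝ),
    C = ⋂ i, {x : Fin k → ℝ | c i ≤ ∑ j, a i j * x j}

lemma isPolySet_univ {k : ℕ} : IsPolySet (Set.univ : Set (Fin k → ℝ)) :=
  ⟨0, fun i => 0, fun i => 0, by simp⟩

lemma isPolySet_halfspace {k : ℕ} (a : Fin k → ℝ) (c : ℝ) :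
    IsPolySet {x : Fin k → ℝ | c ≤ lin a x} :=
  ⟨1, fun _ => a, fun _ => c, by ext x; simp [lin]⟩

lemma isPolySet_inter {k : ℕ} {A B : Set (Fin k → ℝ)} (hA : IsPolySet A) (hB : IsPolySet B) :
    IsPolySet (A ∩ B) := by
  obtain ⟨s₁, a₁, c₁, rfl⟩ := hA
  obtain ⟨s₂, a₂, c₂, rfl⟩ := hB
  refine ⟨s₁ + s₂, Fin.append a₁ a₂, Fin.append c₁ c₂, ?_⟩
  ext x
  simp only [Set.mem_inter_iff, Set.mem_iInter, Set.mem_setOf_eq]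
  constructor
  · rintro ⟨h1, h2⟩ i
    refine Fin.addCases (fun i => ?_) (fun i => ?_) i
    · simpa [Fin.append_left] using h1 i
    · simpa [Fin.append_right] using h2 i
  · intro h
    exact ⟨fun i => by simpa [Fin.append_left] using h (Fin.castAdd s₂ i),
           fun i => by simpa [Fin.append_right] using h (Fin.natAdd s₁ i)⟩

lemma isPolySet_biInter {k : ℕ} {ι : Type*} (t : Finset ι) (D : ι → Set (Fin k → ℝ))
    (h : ∀ i ∈ t, IsPolySet (D i)) : IsPolySet (⋂ i ∈ t, D i) := by
  classical
  induction t using Finset.induction_on with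
  | empty => simpa using isPolySet_univ
  | @insert b t' hx ih =>
    rw [Finset.set_biInter_insert]
    exact isPolySet_inter (h b (Finset.mem_insert_self _ _))
      (ih fun i hi => h i (Finset.mem_insert_of_mem hi))



/-- A compact convex set `C ⊆ ℝ^k` is a polytope (a finite intersection of closed
half-spaces) iff it is locally a polytope at every extreme point and its set of extreme
points is finite. -/
theorem stmt7 {k : ℕ} (C : Set (Fin k → ℝ)) (hC : IsCompact C) (hconv : Convex ℝ C) :
    (∃ (s : ℕ) (a : Fin s → Fin k → ℝ) (c : Fin s → ℝ),
        C = ⋂ i, {x : Fin k → ℝ | c i ≤ ∑ j, a i j * x j}) ↔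
      ((∀ w ∈ Set.extremePoints ℝ C, IsLocallyPolytopeAt C w) ∧
        (Set.extremePoints ℝ C).Finite) := by
  classical
  constructor
  · rintro ⟨s, a, c, hCrep⟩
    have hmemC : ∀ x, x ∈ C ↔ ∀ i, c i ≤ lin (a i) x := by
      intro x
      rw [hCrep]
      simp only [Set.mem_iInter, Set.mem_setOf_eq]
      exact Iff.rfl
    refine ⟨fun w _ => ⟨Set.univ, isOpen_univ, trivial, s, a, c, by rw [hCrep]⟩, ?_⟩
    -- finiteness of extreme points : injectivity of the tight-constraint map
    have hinj : Set.InjOn (fun w => Finset.univ.filter (fun i => lin (a i) w ≤ c i))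
        (Set.extremePoints ℝ C) := by
      intro w hw w' hw' hφ
      by_contra hne
      have hwC : w ∈ C := extremePoints_subset hw
      have hw'C : w' ∈ C := extremePoints_subset hw'
      set v : Fin k → ℝ := w' - w with hv
      have hvne : v ≠ 0 := sub_ne_zero.mpr (Ne.symm hne)
      -- tight constraints annihilate v
      have htv : ∀ i, lin (a i) w ≤ c i → lin (a i) v = 0 := by
        intro i hi
        have h1 : lin (a i) w = c i := le_antisymm hi ((hmemC w).mp hwC i)
        have hi' : lin (a i) w' ≤ c i := by
          simp only at hφ
          have : i ∈ Finset.univ.filter (fun i => lin (a i) w' ≤ c i) := by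
            rw [← hφ]; exact Finset.mem_filter.mpr ⟨Finset.mem_univ _, hi⟩
          exact (Finset.mem_filter.mp this).2
        have h2 : lin (a i) w' = c i := le_antisymm hi' ((hmemC w').mp hw'C i)
        rw [hv, lin_sub]; linarith
      -- open set of strictly satisfied constraints
      set N : Finset (Fin s) := Finset.univ.filter (fun i => ¬ lin (a i) w ≤ c i) with hN
      have hOopen : IsOpen (⋂ i ∈ N, {x : Fin k → ℝ | c i < lin (a i) x}) :=
        isOpen_biInter_finset fun i _ => isOpen_lt continuous_const (lin_continuous _)
      have hwO : w ∈ ⋂ i ∈ N, {x : Fin k → ℝ | c i < lin (a i) x} :=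
        Set.mem_iInter₂.mpr fun i hiN => lt_of_not_ge (Finset.mem_filter.mp hiN).2
      obtain ⟨t, ht0, -, hp, hm⟩ := exists_small_step hOopen hwO v
      have hstep : ∀ r : ℝ, w + r • v ∈ ⋂ i ∈ N, {x : Fin k → ℝ | c i < lin (a i) x} →
          w + r • v ∈ C := by
        intro r hr
        refine (hmemC _).mpr fun i => ?_
        rw [lin_add, lin_smul]
        by_cases hi : lin (a i) w ≤ c i
        · have h1 : lin (a i) w = c i := le_antisymm hi ((hmemC w).mp hwC i)
          rw [htv i hi, h1]; simp
        · have h2 : c i < lin (a i) (w + r • v) :=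
            Set.mem_iInter₂.mp hr i (Finset.mem_filter.mpr ⟨Finset.mem_univ _, hi⟩)
          rw [lin_add, lin_smul] at h2
          linarith
      have hpC : w + t • v ∈ C := hstep t hp
      have hmC : w - t • v ∈ C := by
        have : w - t • v = w + (-t) • v := by funext j; simp; ring
        rw [this]
        apply hstep (-t)
        rw [← this]; exact hm
      have hseg : w ∈ openSegment ℝ (w - t • v) (w + t • v) := by
        refine ⟨1/2, 1/2, by norm_num, by norm_num, by norm_num, ?_⟩
        funext j; simp [Pi.smul_apply, smul_eq_mul]; ring
      have := ((mem_extremePoints.mp hw).2 _ hmC _ hpC hseg).1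
      have h0 : t • v = 0 := by
        have h' : w - t • v = w := this
        have := sub_eq_self.mp h'
        exact this
      rcases smul_eq_zero.mp h0 with h | h
      · exact absurd h (ne_of_gt ht0)
      · exact hvne h
    exact Set.Finite.of_finite_image (Set.toFinite _) hinj
  · rintro ⟨hloc, hfin⟩
    rcases Set.eq_empty_or_nonempty C with hCe | hne
    · exact ⟨1, fun _ => 0, fun _ => 1, by rw [hCe]; ext x; simp⟩
    have h1' : ∀ w : Fin k → ℝ, ∃ (U : Set (Fin k → ℝ)) (s : ℕ) (a : Fin s → Fin k → ℝ)
        (c : Fin s → ℝ), w ∈ Set.extremePoints ℝ C →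
          IsOpen U ∧ w ∈ U ∧ C ∩ U = (⋂ i, {x : Fin k → ℝ | c i ≤ ∑ j, a i j * x j}) ∩ U := by
      intro w
      by_cases hw : w ∈ Set.extremePoints ℝ C
      · obtain ⟨U, hUo, hwU, s, a, c, hrep⟩ := hloc w hw
        exact ⟨U, s, a, c, fun _ => ⟨hUo, hwU, hrep⟩⟩
      · exact ⟨∅, 0, fun _ => 0, fun _ => 0, fun h => absurd h hw⟩
    choose U s a c hprop using h1'
    set Q : (Fin k → ℝ) → Set (Fin k → ℝ) := fun w =>
      ⋂ i ∈ Finset.univ.filter (fun i => lin (a w i) w ≤ c w i),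
        {x : Fin k → ℝ | c w i ≤ lin (a w i) x} with hQ
    have hmain : C = ⋂ w ∈ hfin.toFinset, Q w := by
      apply Set.Subset.antisymm
      · intro x hx
        refine Set.mem_iInter₂.mpr fun w hw => ?_
        rw [Set.Finite.mem_toFinset] at hw
        obtain ⟨hUo, hwU, hrep⟩ := hprop w hw
        refine Set.mem_iInter₂.mpr fun i hi => ?_
        exact tight_global hconv hUo hwU (extremePoints_subset hw) hrep
          (Finset.mem_filter.mp hi).2 hx
      · intro x hx
        by_contra hxC
        obtain ⟨f, u, hfu, hux⟩ := geometric_hahn_banach_closed_point hconv hC.isClosed hxC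
        set F := {y ∈ C | ∀ z ∈ C, f z ≤ f y} with hF
        have hFexp : IsExposed ℝ C F := fun _ => ⟨f, rfl⟩
        have hFne : F.Nonempty := by
          obtain ⟨y, hyC, hy⟩ := hC.exists_isMaxOn hne f.continuous.continuousOn
          exact ⟨y, hyC, fun z hz => hy hz⟩
        obtain ⟨w, hwF⟩ := (hFexp.isCompact hC).extremePoints_nonempty hFne
        have hwE : w ∈ Set.extremePoints ℝ C :=
          hFexp.isExtreme.extremePoints_subset_extremePoints hwF
        have hwFmem : w ∈ F := extremePoints_subset hwF
        have hwC : w ∈ C := hwFmem.1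
        have hwmax : ∀ z ∈ C, f z ≤ f w := hwFmem.2
        obtain ⟨hUo, hwU, hrep⟩ := hprop w hwE
        -- x satisfies all tight constraints at w
        have hxQ : x ∈ Q w := Set.mem_iInter₂.mp hx w (hfin.mem_toFinset.mpr hwE)
        have hwP : w ∈ (⋂ i, {x : Fin k → ℝ | c w i ≤ ∑ j, a w i j * x j}) ∩ U w := by
          rw [← hrep]; exact ⟨hwC, hwU⟩
        have hv : ∀ i, lin (a w i) w ≤ c w i → 0 ≤ lin (a w i) (x - w) := by
          intro i hi
          have h1 : c w i ≤ lin (a w i) x :=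
            Set.mem_iInter₂.mp hxQ i (Finset.mem_filter.mpr ⟨Finset.mem_univ _, hi⟩)
          have h2 : lin (a w i) w = c w i := le_antisymm hi (Set.mem_iInter.mp hwP.1 i)
          rw [lin_sub]; linarith
        obtain ⟨t, ht0, htC⟩ := dir_into hUo hwU hwC hrep hv
        have hfle : f (w + t • (x - w)) ≤ f w := hwmax _ htC
        have hexp : f (w + t • (x - w)) = f w + t * (f x - f w) := by
          rw [map_add, map_smul, map_sub]; simp [smul_eq_mul]
        have hfw : f w < u := hfu w hwC
        rw [hexp] at hfle
        nlinarith
    have hpoly : IsPolySet C := by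
      rw [hmain]
      exact isPolySet_biInter _ _ fun w _ =>
        isPolySet_biInter _ _ fun i _ => isPolySet_halfspace _ _
    exact hpoly
end

section
/- The K-semistable domain of a log pair (X, ∑_{j=1}^k D_j) is a convex subset of the closed simplex: if (X, ∑ a_j D_j) and (X, ∑ b_j D_j) are both K-semistable (with ∑ a_j ≤ 1, ∑ b_j ≤ 1, a_j, b_j ≥ 0 rational), then for every rational t ∈ [0,1], (X, ∑ (t a_j + (1−t) b_j) D_j) is K-semistable. -/
/-- Interpolation / convexity of the K-semistable domain. Abstract formulation: `ι`
indexes the prime divisors over the Fano variety `X`; for a coefficient vector `c`,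
`A₀ e − ∑ⱼ cⱼ · ord j e` is the log discrepancy `A_{X, ∑ cⱼDⱼ}(E)` (affine-linear in the
coefficients), while `S` scales as `(1 − ∑ cⱼ)·S e`. K-semistability of `(X, ∑ cⱼ Dⱼ)`
(log Fano when `∑ cⱼ < 1`, log canonical Calabi–Yau when `∑ cⱼ = 1`) is characterized by
`A_{X, ∑ cⱼDⱼ}(E) ≥ (1 − ∑ cⱼ)·S(E)` for all `E`. If `(X, ∑ aⱼDⱼ)` and `(X, ∑ bⱼDⱼ)` are
K-semistable, so is `(X, ∑ (t·aⱼ + (1−t)·bⱼ) Dⱼ)` for every rational `t ∈ [0,1]`. -/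
theorem stmt11 {ι : Type*} {k : ℕ}
    (A0 S : ι → ℝ) (ord : Fin k → ι → ℝ) (hS : ∀ e, 0 ≤ S e)
    (Kss : (Fin k → ℝ) → Prop)
    (hKss : ∀ c : Fin k → ℝ,
      Kss c ↔ ∀ e, (1 - ∑ j, c j) * S e ≤ A0 e - ∑ j, c j * ord j e)
    (a b : Fin k → ℚ)
    (ha0 : ∀ j, 0 ≤ a j) (hb0 : ∀ j, 0 ≤ b j)
    (ha1 : (∑ j, a j) ≤ 1) (hb1 : (∑ j, b j) ≤ 1)
    (hA : Kss (fun j => (a j : ℝ))) (hB : Kss (fun j => (b j : ℝ)))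
    (t : ℚ) (ht0 : 0 ≤ t) (ht1 : t ≤ 1) :
    Kss (fun j => (t : ℝ) * (a j : ℝ) + (1 - (t : ℝ)) * (b j : ℝ)) := by
  rw [hKss] at *
  intro e
  have hA' := hA e
  have hB' := hB e
  have ht0' : (0 : ℝ) ≤ (t : ℝ) := by exact_mod_cast ht0
  have ht1' : (t : ℝ) ≤ 1 := by exact_mod_cast ht1
  have h1 : ∑ j, ((t : ℝ) * (a j : ℝ) + (1 - (t : ℝ)) * (b j : ℝ))
      = (t : ℝ) * ∑ j, (a j : ℝ) + (1 - (t : ℝ)) * ∑ j, (b j : ℝ) := by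
    rw [Finset.sum_add_distrib, Finset.mul_sum, Finset.mul_sum]
  have h2 : ∑ j, ((t : ℝ) * (a j : ℝ) + (1 - (t : ℝ)) * (b j : ℝ)) * ord j e
      = (t : ℝ) * ∑ j, (a j : ℝ) * ord j e
        + (1 - (t : ℝ)) * ∑ j, (b j : ℝ) * ord j e := by
    rw [Finset.mul_sum, Finset.mul_sum, ← Finset.sum_add_distrib]
    congr 1; ext j; ring
  rw [h1, h2]
  nlinarith [mul_le_mul_of_nonneg_left hA' ht0',
    mul_le_mul_of_nonneg_left hB' (by linarith : (0:ℝ) ≤ 1 - t)]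
end
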